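/- arXiv:2207.08720 — 6 statements merged into one kernel-verified Lean document; each statement's English description precedes it below -/
import Mathlib

section
/- Let X be a T₀ space and A ⊆ X any subset. Then the closure of the set {↑a : a ∈ A} in the Smyth power space P_S(X) is exactly ◇cl(A) = {K ∈ K(X) : K ∩ cl(A) ≠ ∅}, where cl(A) is the closure of A in X and ↑a is the saturation (upward closure under the specialization order) of {a}. -/
open Set Topology TopologicalSpace

universe u v

/-- A subset of a topological space is *saturated* if it equals the intersection of the
open sets containing it. -/
def IsSat {X : Type u} [TopologicalSpace X] (A : Set X) : Prop :=
  A = ⋂₀ {U : Set X | IsOpen U ∧ A ⊆ U}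

/-- The saturation `↑a` of a point `a` : the intersection of all open sets containing `a`. -/
def satPt {X : Type u} [TopologicalSpace X] (a : X) : Set X :=
  ⋂₀ {U : Set X | IsOpen U ∧ a ∈ U}

/-- `KS X` is the collection of all nonempty compact saturated subsets of `X`. -/
def KS (X : Type u) [TopologicalSpace X] : Type u :=
  {K : Set X // K.Nonempty ∧ IsCompact K ∧ IsSat K}

/-- The *Smyth order* on `KS X` : `K ≤ L` iff `L ⊆ K` (reverse inclusion). -/
instance KS.instPartialOrder {X : Type u} [TopologicalSpace X] : PartialOrder (KS X) where
  le K L := L.1 ⊆ K.1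
  le_refl K := subset_rfl
  le_trans K L M h₁ h₂ := by intro x hx; exact h₁ (h₂ hx)
  le_antisymm K L h₁ h₂ := by exact Subtype.ext (subset_antisymm h₂ h₁)

/-- The *upper Vietoris topology* on `KS X`, generated by the sets `□U = {K | K ⊆ U}`
for `U` open in `X`.  The resulting space is the Smyth power space `P_S(X)`. -/
def upperVietoris (X : Type u) [TopologicalSpace X] : TopologicalSpace (KS X) :=
  TopologicalSpace.generateFrom
    {S : Set (KS X) | ∃ U : Set X, IsOpen U ∧ S = {K : KS X | K.1 ⊆ U}}

/-- Scott-open subsets of a preorder: upper sets inaccessible by suprema of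
(nonempty) directed sets. -/
def ScottOpen {P : Type u} [Preorder P] (U : Set P) : Prop :=
  IsUpperSet U ∧ ∀ d : Set P, d.Nonempty → DirectedOn (· ≤ ·) d →
    ∀ a : P, IsLUB d a → a ∈ U → (d ∩ U).Nonempty

/-- The Scott topology of a preorder. -/
def scottTop (P : Type u) [Preorder P] : TopologicalSpace P where
  IsOpen := ScottOpen
  isOpen_univ := ⟨isUpperSet_univ, fun d hd _ _ _ _ => by simpa using hd⟩
  isOpen_inter := by
    rintro U V ⟨hUu, hUd⟩ ⟨hVu, hVd⟩
    refine ⟨hUu.inter hVu, fun d hd hdir a ha haUV => ?_⟩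
    obtain ⟨x, hxd, hxU⟩ := hUd d hd hdir a ha haUV.1
    obtain ⟨y, hyd, hyV⟩ := hVd d hd hdir a ha haUV.2
    obtain ⟨z, hzd, hxz, hyz⟩ := hdir x hxd y hyd
    exact ⟨z, hzd, hUu hxz hxU, hVu hyz hyV⟩
  isOpen_sUnion := by
    intro S hS
    refine ⟨isUpperSet_sUnion fun s hs => (hS s hs).1, fun d hd hdir a ha haU => ?_⟩
    obtain ⟨t, htS, hat⟩ := haU
    obtain ⟨x, hxd, hxt⟩ := (hS t htS).2 d hd hdir a ha hat
    exact ⟨x, hxd, t, htS, hxt⟩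

/-- A topological space is *well-filtered* if for every nonempty family of nonempty compact
saturated sets which is filtered under reverse inclusion and every open `U` containing the
intersection of the family, some member of the family is contained in `U`. -/
def WellFiltered (X : Type u) [TopologicalSpace X] : Prop :=
  ∀ 𝒦 : Set (Set X), 𝒦.Nonempty →
    (∀ K ∈ 𝒦, K.Nonempty ∧ IsCompact K ∧ IsSat K) →
    (∀ K₁ ∈ 𝒦, ∀ K₂ ∈ 𝒦, ∃ K₃ ∈ 𝒦, K₃ ⊆ K₁ ∧ K₃ ⊆ K₂) →
    ∀ U : Set X, IsOpen U → ⋂₀ 𝒦 ⊆ U → ∃ K ∈ 𝒦, K ⊆ U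

/-- The specialization order of a topological space: `x ≤ y` iff `x ∈ cl {y}`. -/
def specLE {X : Type u} [TopologicalSpace X] (x y : X) : Prop := x ∈ closure {y}

/-- Least upper bound with respect to an explicit relation. -/
def RelLUB {P : Type u} (r : P → P → Prop) (d : Set P) (a : P) : Prop :=
  (∀ x ∈ d, r x a) ∧ ∀ b : P, (∀ x ∈ d, r x b) → r a b

/-- Scott openness with respect to an explicit relation. -/
def RelScottOpen {P : Type u} (r : P → P → Prop) (U : Set P) : Prop :=
  (∀ ⦃x y : P⦄, x ∈ U → r x y → y ∈ U) ∧
  ∀ d : Set P, d.Nonempty → DirectedOn r d → ∀ a : P, RelLUB r d a → a ∈ U → (d ∩ U).Nonempty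

/-- A `d`-space (monotone convergence space): the specialization order is directed complete
and every open set is Scott open with respect to the specialization order. -/
def DSpace (X : Type u) [TopologicalSpace X] : Prop :=
  (∀ d : Set X, d.Nonempty → DirectedOn specLE d → ∃ a : X, RelLUB specLE d a) ∧
  ∀ U : Set X, IsOpen U → RelScottOpen specLE U

/-- A space is *sober* if every irreducible closed set is the closure of a unique point. -/
def SoberSp (Z : Type u) [TopologicalSpace Z] : Prop :=
  ∀ A : Set Z, IsClosed A → IsIrreducible A → ∃! z : Z, A = closure {z}

/-- A closed set `A` is a *Rudin set* if there is a (nonempty) family of nonempty compact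
saturated sets, filtered under reverse inclusion, such that `A` is a minimal closed set
meeting every member of the family. -/
def RudinSet {X : Type u} [TopologicalSpace X] (A : Set X) : Prop :=
  IsClosed A ∧
  ∃ 𝒦 : Set (Set X), 𝒦.Nonempty ∧
    (∀ K ∈ 𝒦, K.Nonempty ∧ IsCompact K ∧ IsSat K) ∧
    (∀ K₁ ∈ 𝒦, ∀ K₂ ∈ 𝒦, ∃ K₃ ∈ 𝒦, K₃ ⊆ K₁ ∧ K₃ ⊆ K₂) ∧
    (∀ K ∈ 𝒦, (A ∩ K).Nonempty) ∧
    (∀ B : Set X, IsClosed B → (∀ K ∈ 𝒦, (B ∩ K).Nonempty) → B ⊆ A → B = A)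

/-- A *Rudin space*: every irreducible closed subset is a Rudin set. -/
def RudinSpace (X : Type u) [TopologicalSpace X] : Prop :=
  ∀ A : Set X, IsClosed A → IsIrreducible A → RudinSet A

/-- A closed set `A` is *well-filtered determined* (WD) if every continuous map into a
well-filtered T₀ space sends it to a set whose closure is a point closure. -/
def WDSet {X : Type u} [TopologicalSpace X] (A : Set X) : Prop :=
  ∀ (Y : Type v) [TopologicalSpace Y] [T0Space Y], WellFiltered Y →
    ∀ f : X → Y, Continuous f → ∃ y : Y, closure (f '' A) = closure {y}

/-- A *well-filtered determined (WD) space*: every irreducible closed subset is WD. -/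
def WDSpace (X : Type u) [TopologicalSpace X] : Prop :=
  ∀ A : Set X, IsClosed A → IsIrreducible A → WDSet.{u, v} A

/-- Property S: for every irreducible closed set `A`, the family `{↑a : a ∈ A}` is an
irreducible subset of the Scott power space `Σ K(X)`, or
`◇A = {K ∈ K(X) : K ∩ A ≠ ∅}` is an irreducible closed subset of `Σ K(X)`. -/
def PropertyS (X : Type u) [TopologicalSpace X] : Prop :=
  ∀ A : Set X, IsClosed A → IsIrreducible A →
    @IsIrreducible (KS X) (scottTop (KS X)) {K : KS X | ∃ a ∈ A, K.1 = satPt a} ∨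
    (@IsClosed (KS X) (scottTop (KS X)) {K : KS X | (K.1 ∩ A).Nonempty} ∧
      @IsIrreducible (KS X) (scottTop (KS X)) {K : KS X | (K.1 ∩ A).Nonempty})

/-- The order of Jia's dcpo on `ℕ × ℕ × (ℕ ∪ {∞})`:
`(i₁,j₁,k₁) ≤ (i₂,j₂,k₂)` iff (`i₁ = i₂`, `j₁ = j₂` and `k₁ ≤ k₂`) or
(`i₂ = i₁ + 1`, `k₁ ≤ j₂` and `k₂ = ∞`). -/
def LJiaLE (a b : ℕ × ℕ × WithTop ℕ) : Prop :=
  (a.1 = b.1 ∧ a.2.1 = b.2.1 ∧ a.2.2 ≤ b.2.2) ∨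
  (b.1 = a.1 + 1 ∧ a.2.2 ≤ (b.2.1 : WithTop ℕ) ∧ b.2.2 = ⊤)

lemma mem_satPt_self {X : Type u} [TopologicalSpace X] (a : X) : a ∈ satPt a :=
  fun _U hU => hU.2

lemma satPt_subset {X : Type u} [TopologicalSpace X] {a : X} {U : Set X}
    (hU : IsOpen U) (ha : a ∈ U) : satPt a ⊆ U :=
  Set.sInter_subset_of_mem ⟨hU, ha⟩

lemma satPt_compact {X : Type u} [TopologicalSpace X] (a : X) : IsCompact (satPt a) := by
  refine isCompact_of_finite_subcover fun U hU hcov => ?_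
  obtain ⟨i, hi⟩ := Set.mem_iUnion.mp (hcov (mem_satPt_self a))
  exact ⟨{i}, by simpa using satPt_subset (hU i) hi⟩

lemma satPt_sat {X : Type u} [TopologicalSpace X] (a : X) : IsSat (satPt a) := by
  apply subset_antisymm
  · intro x hx U hU
    exact hx U ⟨hU.1, hU.2 (mem_satPt_self a)⟩
  · intro x hx U hU
    exact hx U ⟨hU.1, satPt_subset hU.1 hU.2⟩

lemma uv_basis (X : Type u) [TopologicalSpace X] :
    @TopologicalSpace.IsTopologicalBasis (KS X) (upperVietoris X)
      {S : Set (KS X) | ∃ U : Set X, IsOpen U ∧ S = {K : KS X | K.1 ⊆ U}} := by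
  letI := upperVietoris X
  refine ⟨?_, ?_, rfl⟩
  · rintro S₁ ⟨U₁, hU₁, rfl⟩ S₂ ⟨U₂, hU₂, rfl⟩ K ⟨h₁, h₂⟩
    exact ⟨{K : KS X | K.1 ⊆ U₁ ∩ U₂}, ⟨U₁ ∩ U₂, hU₁.inter hU₂, rfl⟩,
      Set.subset_inter h₁ h₂, fun L hL => ⟨hL.trans Set.inter_subset_left,
        hL.trans Set.inter_subset_right⟩⟩
  · refine Set.eq_univ_of_univ_subset fun K _ => ?_
    exact Set.mem_sUnion.mpr ⟨Set.univ, ⟨Set.univ, isOpen_univ, by ext; simp⟩, by simp⟩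

/-- For a `T₀` space `X` and any `A ⊆ X`, the closure of `{↑a : a ∈ A}` in the
Smyth power space `P_S(X)` is exactly `◇ cl(A) = {K ∈ K(X) : K ∩ cl(A) ≠ ∅}`. -/
theorem stmt0 {X : Type u} [TopologicalSpace X] [T0Space X] (A : Set X) :
    @closure (KS X) (upperVietoris X) {K : KS X | ∃ a ∈ A, K.1 = satPt a} =
      {K : KS X | (K.1 ∩ closure A).Nonempty} := by
  letI := upperVietoris X
  apply subset_antisymm
  · apply closure_minimal
    · rintro K ⟨a, haA, hK⟩
      exact ⟨a, hK ▸ mem_satPt_self a, subset_closure haA⟩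
    · rw [← isOpen_compl_iff]
      have : {K : KS X | (K.1 ∩ closure A).Nonempty}ᶜ =
          {K : KS X | K.1 ⊆ (closure A)ᶜ} := by
        ext K
        simp [Set.not_nonempty_iff_eq_empty, Set.subset_compl_iff_disjoint_right,
          Set.disjoint_iff_inter_eq_empty]
      rw [this]
      exact (uv_basis X).isOpen ⟨(closure A)ᶜ, isClosed_closure.isOpen_compl, rfl⟩
  · rintro K ⟨x, hxK, hxA⟩
    rw [(uv_basis X).mem_closure_iff]
    rintro S ⟨U, hU, rfl⟩ hKU
    obtain ⟨a, haU, haA⟩ := mem_closure_iff.mp hxA U hU (hKU hxK)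
    exact ⟨⟨satPt a, ⟨a, mem_satPt_self a⟩, satPt_compact a, satPt_sat a⟩,
      satPt_subset hU haU, a, haA, rfl⟩
end

section
/- If X is a well-filtered T₀ space, then K(X) with the Smyth order is a dcpo (every directed family {K_d : d ∈ D}, i.e. filtered under reverse inclusion, has a supremum, namely ⋂_{d∈D} K_d, which is again a nonempty compact saturated set), and every open set of the upper Vietoris topology on K(X) is Scott open with respect to the Smyth order. -/
open Set Topology TopologicalSpace

universe u v

/-!
In a well-filtered space the intersection `S` of a filtered family `𝒦` of compact saturated sets
is "approximated from above" by the family: every open set containing `S` already contains a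
member of `𝒦`. Applied to `∅` this makes `S` nonempty, applied to the union of an open cover it
makes `S` compact, and `S` is saturated as an intersection of saturated sets; so `S` is the Smyth
supremum of `𝒦`. Applied to an open `V` it says that `□V` is inaccessible by that supremum, i.e.
Scott open; since the sets `□V` generate the upper Vietoris topology, that topology is coarser
than the Scott topology.
-/

theorem isSat_iff_sInter_subset {X : Type u} [TopologicalSpace X] {A : Set X} :
    IsSat A ↔ ⋂₀ {U : Set X | IsOpen U ∧ A ⊆ U} ⊆ A :=
  ⟨fun h => h.symm.subset, fun h => h.antisymm' (subset_sInter fun _ hU => hU.2)⟩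

theorem isSat_biInter {X : Type u} [TopologicalSpace X] {ι : Type*} {t : Set ι}
    {s : ι → Set X} (hs : ∀ i ∈ t, IsSat (s i)) : IsSat (⋂ i ∈ t, s i) := by
  refine isSat_iff_sInter_subset.2 fun x hx => mem_iInter₂.2 fun i hi => ?_
  rw [hs i hi]
  exact fun V hV => hx V ⟨hV.1, (biInter_subset_of_mem hi).trans hV.2⟩

theorem isCompact_of_forall_isOpen_exists_isCompact {X : Type u} [TopologicalSpace X]
    {S : Set X} (h : ∀ U, IsOpen U → S ⊆ U → ∃ K, IsCompact K ∧ S ⊆ K ∧ K ⊆ U) :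
    IsCompact S := by
  refine isCompact_of_finite_subcover fun Us hUs hcover => ?_
  obtain ⟨K, hK, hSK, hKU⟩ := h _ (isOpen_iUnion hUs) hcover
  obtain ⟨t, ht⟩ := hK.elim_finite_subcover Us hUs hKU
  exact ⟨t, hSK.trans ht⟩

namespace KS

variable {X : Type u} [TopologicalSpace X]

theorem le_def {K L : KS X} : K ≤ L ↔ L.1 ⊆ K.1 := Iff.rfl

theorem isLUB_of_val_eq_biInter {𝒦 : Set (KS X)} {S : KS X} (hS : S.1 = ⋂ K ∈ 𝒦, K.1) :
    IsLUB 𝒦 S := by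
  refine ⟨fun K hK => ?_, fun L hL => ?_⟩
  · exact le_def.2 (hS ▸ biInter_subset_of_mem hK)
  · exact le_def.2 (hS ▸ subset_iInter₂ fun K hK => le_def.1 (hL hK))

theorem isUpperSet_setOf_val_subset (V : Set X) : IsUpperSet {K : KS X | K.1 ⊆ V} :=
  fun _ _ hKL hK => (le_def.1 hKL).trans hK

end KS

namespace WellFiltered

variable {X : Type u} [TopologicalSpace X] (hwf : WellFiltered X)
  {𝒦 : Set (KS X)} (hne : 𝒦.Nonempty) (hdir : DirectedOn (· ≤ ·) 𝒦)
include hwf hne hdir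

theorem exists_val_subset_of_biInter_subset {U : Set X} (hU : IsOpen U)
    (hsub : ⋂ K ∈ 𝒦, K.1 ⊆ U) : ∃ K ∈ 𝒦, K.1 ⊆ U := by
  have hfiltered : ∀ K₁ ∈ Subtype.val '' 𝒦, ∀ K₂ ∈ Subtype.val '' 𝒦,
      ∃ K₃ ∈ Subtype.val '' 𝒦, K₃ ⊆ K₁ ∧ K₃ ⊆ K₂ := by
    rintro _ ⟨K₁, hK₁, rfl⟩ _ ⟨K₂, hK₂, rfl⟩
    obtain ⟨K₃, hK₃, h₁, h₂⟩ := hdir K₁ hK₁ K₂ hK₂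
    exact ⟨K₃.1, mem_image_of_mem _ hK₃, h₁, h₂⟩
  obtain ⟨_, ⟨K, hK, rfl⟩, hKU⟩ := hwf _ (hne.image _) (by rintro _ ⟨K, -, rfl⟩; exact K.2)
    hfiltered U hU fun x hx => hsub (mem_iInter₂.2 fun K hK => hx _ ⟨K, hK, rfl⟩)
  exact ⟨K, hK, hKU⟩

theorem biInter_nonempty : (⋂ K ∈ 𝒦, K.1).Nonempty := by
  by_contra hempty
  obtain ⟨K, -, hK⟩ := exists_val_subset_of_biInter_subset hwf hne hdir isOpen_empty
    (not_nonempty_iff_eq_empty.1 hempty).subset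
  exact K.2.1.ne_empty (subset_empty_iff.1 hK)

theorem isCompact_biInter : IsCompact (⋂ K ∈ 𝒦, K.1) :=
  isCompact_of_forall_isOpen_exists_isCompact fun _ hU hsub =>
    let ⟨K, hK, hKU⟩ := exists_val_subset_of_biInter_subset hwf hne hdir hU hsub
    ⟨K.1, K.2.2.1, biInter_subset_of_mem hK, hKU⟩

theorem exists_isLUB_val_eq_biInter : ∃ S : KS X, S.1 = (⋂ K ∈ 𝒦, K.1) ∧ IsLUB 𝒦 S :=
  let S : KS X := ⟨_, biInter_nonempty hwf hne hdir, isCompact_biInter hwf hne hdir,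
    isSat_biInter fun K _ => K.2.2.2⟩
  ⟨S, rfl, KS.isLUB_of_val_eq_biInter rfl⟩

end WellFiltered

theorem WellFiltered.scottOpen_setOf_val_subset {X : Type u} [TopologicalSpace X]
    (hwf : WellFiltered X) {V : Set X} (hV : IsOpen V) : ScottOpen {K : KS X | K.1 ⊆ V} := by
  refine ⟨KS.isUpperSet_setOf_val_subset V, fun 𝒦 hne hdir S hS hSV => ?_⟩
  obtain ⟨S', hS'eq, hS'⟩ := hwf.exists_isLUB_val_eq_biInter hne hdir
  rw [hS.unique hS'] at hSV
  exact hwf.exists_val_subset_of_biInter_subset hne hdir hV (hS'eq ▸ hSV)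

theorem WellFiltered.scottTop_le_upperVietoris {X : Type u} [TopologicalSpace X]
    (hwf : WellFiltered X) : scottTop (KS X) ≤ upperVietoris X :=
  le_generateFrom fun _ ⟨_, hV, hs⟩ => hs ▸ hwf.scottOpen_setOf_val_subset hV

theorem stmt1_general {X : Type u} [TopologicalSpace X] (hwf : WellFiltered X) :
    (∀ 𝒦 : Set (KS X), 𝒦.Nonempty → DirectedOn (· ≤ ·) 𝒦 →
      ∃ S : KS X, S.1 = (⋂ K ∈ 𝒦, K.1) ∧ IsLUB 𝒦 S) ∧
    (∀ U : Set (KS X), @IsOpen (KS X) (upperVietoris X) U → ScottOpen U) :=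
  ⟨fun _ hne hdir => hwf.exists_isLUB_val_eq_biInter hne hdir,
    fun U hU => hwf.scottTop_le_upperVietoris U hU⟩

/-- If `X` is a well-filtered `T₀` space, then `K(X)` with the Smyth order is a
dcpo — every nonempty family directed in the Smyth order (i.e. filtered under reverse inclusion)
has a supremum, namely its intersection, which is again a nonempty compact saturated set — and
every upper-Vietoris-open subset of `K(X)` is Scott open. -/
theorem stmt1 {X : Type u} [TopologicalSpace X] [T0Space X] (hwf : WellFiltered X) :
    (∀ 𝒦 : Set (KS X), 𝒦.Nonempty → DirectedOn (· ≤ ·) 𝒦 →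
      ∃ S : KS X, S.1 = (⋂ K ∈ 𝒦, K.1) ∧ IsLUB 𝒦 S) ∧
    (∀ U : Set (KS X), @IsOpen (KS X) (upperVietoris X) U → ScottOpen U) :=
  stmt1_general hwf
end

section
/- Let X be a well-filtered T₀ space. Then: (1) for every nonempty compact saturated subset 𝒦 of the Scott power space Σ K(X), the union ⋃𝒦 is a nonempty compact saturated subset of X; (2) the union map ⋃ : K(Σ K(X)) → K(X), 𝒦 ↦ ⋃𝒦, is Scott-continuous, i.e. continuous when both posets carry their Scott topologies (with respect to the Smyth orders). -/
open Set Topology TopologicalSpace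

universe u v

section Aux

variable {Y : Type u} [TopologicalSpace Y]

lemma IsSat.eq' {A : Set Y} (h : IsSat A) :
    A = ⋂₀ {U : Set Y | IsOpen U ∧ A ⊆ U} := h

lemma mem_satPt_self_s5 (a : Y) : a ∈ satPt a :=
  mem_sInter.mpr fun _ hU => hU.2

lemma satPt_subset_open {U : Set Y} (hU : IsOpen U) {a : Y} (ha : a ∈ U) : satPt a ⊆ U :=
  fun _ hz => mem_sInter.mp hz U ⟨hU, ha⟩

lemma isCompact_satPt (a : Y) : IsCompact (satPt a) := by
  refine isCompact_of_finite_subcover fun C hC hcov => ?_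
  obtain ⟨i, hi⟩ := mem_iUnion.mp (hcov (mem_satPt_self_s5 a))
  refine ⟨{i}, fun z hz => mem_iUnion₂.mpr ⟨i, Finset.mem_singleton_self i,
    satPt_subset_open (hC i) hi hz⟩⟩

lemma isSat_of_sInter {A : Set Y} {S : Set (Set Y)} (hS : ∀ U ∈ S, IsOpen U)
    (h : A = ⋂₀ S) : IsSat A := by
  refine Subset.antisymm (fun x hx => mem_sInter.mpr fun U hU => hU.2 hx) fun x hx => ?_
  rw [h]
  exact mem_sInter.mpr fun U hU =>
    mem_sInter.mp hx U ⟨hS U hU, by rw [h]; exact sInter_subset_of_mem hU⟩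

lemma isSat_satPt (a : Y) : IsSat (satPt a) :=
  isSat_of_sInter (S := {U : Set Y | IsOpen U ∧ a ∈ U}) (fun _ hU => hU.1) rfl

/-- The saturation of a point as an element of `KS Y`. -/
def KS.pt (a : Y) : KS Y := ⟨satPt a, ⟨a, mem_satPt_self_s5 a⟩, isCompact_satPt a, isSat_satPt a⟩

lemma satPt_subset_of_isSat {A : Set Y} (hA : IsSat A) {a : Y} (ha : a ∈ A) :
    satPt a ⊆ A := by
  intro z hz
  rw [hA.eq']
  exact mem_sInter.mpr fun U hU => mem_sInter.mp hz U ⟨hU.1, hU.2 ha⟩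

lemma KS.le_of_subset {K L : KS Y} (h : L.1 ⊆ K.1) : K ≤ L := h

lemma KS.subset_of_le {K L : KS Y} (h : K ≤ L) : L.1 ⊆ K.1 := h

/-- The underlying set of a least upper bound (for the Smyth order) of a set of
nonempty compact saturated sets is the intersection of the family. -/
lemma KS.isLUB_val_eq {d : Set (KS Y)} {a : KS Y} (h : IsLUB d a) :
    a.1 = ⋂ K ∈ d, K.1 := by
  refine Subset.antisymm
    (fun x hx => mem_iInter₂.mpr fun K hK => KS.subset_of_le (h.1 hK) hx) fun y hy => ?_
  have hub : KS.pt y ∈ upperBounds d := fun K hK =>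
    KS.le_of_subset (satPt_subset_of_isSat K.2.2.2 (mem_iInter₂.mp hy K hK))
  exact KS.subset_of_le (h.2 hub) (mem_satPt_self_s5 y)

/-- The saturation of a set. -/
def satSet (A : Set Y) : Set Y := ⋂₀ {U : Set Y | IsOpen U ∧ A ⊆ U}

lemma subset_satSet (A : Set Y) : A ⊆ satSet A :=
  fun _ hx => mem_sInter.mpr fun _ hU => hU.2 hx

lemma satSet_subset_open {A U : Set Y} (hU : IsOpen U) (h : A ⊆ U) : satSet A ⊆ U :=
  fun _ hx => mem_sInter.mp hx U ⟨hU, h⟩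

lemma satSet_mono {A B : Set Y} (h : A ⊆ B) : satSet A ⊆ satSet B :=
  fun x hx => mem_sInter.mpr fun U hU => mem_sInter.mp hx U ⟨hU.1, h.trans hU.2⟩

lemma isSat_satSet (A : Set Y) : IsSat (satSet A) :=
  isSat_of_sInter (S := {U : Set Y | IsOpen U ∧ A ⊆ U}) (fun _ hU => hU.1) rfl

lemma isCompact_satSet {A : Set Y} (hA : IsCompact A) : IsCompact (satSet A) := by
  refine isCompact_of_finite_subcover fun C hC hcov => ?_
  obtain ⟨t, ht⟩ := hA.elim_finite_subcover C hC ((subset_satSet A).trans hcov)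
  exact ⟨t, satSet_subset_open (isOpen_biUnion fun i _ => hC i) ht⟩

lemma exists_satPt_of_mem_satSet {A : Set Y} {x : Y} (hx : x ∈ satSet A) :
    ∃ a ∈ A, x ∈ satPt a := by
  by_contra h
  push_neg at h
  have hsub : A ⊆ ⋃₀ {V : Set Y | IsOpen V ∧ x ∉ V} := by
    intro a ha
    have h1 : x ∉ satPt a := h a ha
    simp only [satPt, mem_sInter] at h1
    push_neg at h1
    obtain ⟨V, hV, hxV⟩ := h1
    exact ⟨V, ⟨hV.1, hxV⟩, hV.2⟩
  have hxU := mem_sInter.mp hx _ ⟨isOpen_sUnion fun V hV => hV.1, hsub⟩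
  obtain ⟨V, hV, hxV⟩ := hxU
  exact hV.2 hxV

/-- A union of saturated sets is saturated. -/
lemma isSat_biUnion_KS (𝒦 : Set (KS Y)) : IsSat (⋃ K ∈ 𝒦, K.1) := by
  refine Subset.antisymm (fun x hx => mem_sInter.mpr fun U hU => hU.2 hx) fun x hx => ?_
  by_contra hxA
  have hsub : (⋃ K ∈ 𝒦, K.1) ⊆ ⋃₀ {V : Set Y | IsOpen V ∧ x ∉ V} := by
    intro y hy
    obtain ⟨K, hK, hyK⟩ := mem_iUnion₂.mp hy
    have hxK : x ∉ K.1 := fun h => hxA (mem_iUnion₂.mpr ⟨K, hK, h⟩)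
    rw [K.2.2.2.eq', mem_sInter] at hxK
    push_neg at hxK
    obtain ⟨V, hV, hxV⟩ := hxK
    exact ⟨V, ⟨hV.1, hxV⟩, hV.2 hyK⟩
  have hxU := mem_sInter.mp hx _ ⟨isOpen_sUnion fun V hV => hV.1, hsub⟩
  obtain ⟨V, hV, hxV⟩ := hxU
  exact hV.2 hxV

/-- A set saturated for a Scott topology is an upper set. -/
lemma isUpperSet_of_isSat_scott {P : Type u} [Preorder P] {A : Set P}
    (hA : @IsSat P (scottTop P) A) : IsUpperSet A := by
  letI : TopologicalSpace P := scottTop P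
  intro x y hxy hx
  rw [hA.eq'] at hx ⊢
  refine mem_sInter.mpr fun W hW => ?_
  have hWo : ScottOpen W := hW.1
  exact hWo.1 hxy (mem_sInter.mp hx W hW)

end Aux

section WFAux

variable {X : Type u} [TopologicalSpace X]

/-- In a well-filtered space, `□U` is Scott open in the Smyth order. -/
lemma scottOpen_box (hwf : WellFiltered X) {U : Set X} (hU : IsOpen U) :
    ScottOpen {K : KS X | K.1 ⊆ U} := by
  constructor
  · intro K L hKL hK
    exact (KS.subset_of_le hKL).trans hK
  · intro d hd hdir a ha haU
    have hae := KS.isLUB_val_eq ha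
    have h1 : ∀ K ∈ Subtype.val '' d, Set.Nonempty K ∧ IsCompact K ∧ IsSat K := by
      rintro _ ⟨K, hK, rfl⟩; exact K.2
    have h2 : ∀ K₁ ∈ Subtype.val '' d, ∀ K₂ ∈ Subtype.val '' d,
        ∃ K₃ ∈ Subtype.val '' d, K₃ ⊆ K₁ ∧ K₃ ⊆ K₂ := by
      rintro _ ⟨K₁, hm₁, rfl⟩ _ ⟨K₂, hm₂, rfl⟩
      obtain ⟨K₃, h₃, l₁, l₂⟩ := hdir K₁ hm₁ K₂ hm₂
      exact ⟨K₃.1, mem_image_of_mem _ h₃, KS.subset_of_le l₁, KS.subset_of_le l₂⟩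
    have h3 : ⋂₀ (Subtype.val '' d) ⊆ U := by
      intro x hx
      apply haU
      rw [hae]
      exact mem_iInter₂.mpr fun K hK => mem_sInter.mp hx _ (mem_image_of_mem _ hK)
    obtain ⟨_, ⟨K, hKd, rfl⟩, hKU⟩ := hwf _ (hd.image _) h1 h2 U hU h3
    exact ⟨K, hKd, hKU⟩

/-- In a well-filtered space, the union of a Scott-compact family of nonempty compact
saturated sets is compact. -/
lemma isCompact_biUnion_KS (hwf : WellFiltered X) {ℰ : Set (KS X)}
    (hℰ : @IsCompact (KS X) (scottTop (KS X)) ℰ) :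
    IsCompact (⋃ K ∈ ℰ, K.1) := by
  classical
  refine isCompact_of_finite_subcover fun {ι} C hC hcov => ?_
  letI : TopologicalSpace (KS X) := scottTop (KS X)
  have hD : ∀ t : Finset ι, IsOpen {K : KS X | K.1 ⊆ ⋃ i ∈ t, C i} :=
    fun t => scottOpen_box hwf (isOpen_biUnion fun i _ => hC i)
  have hEcov : ℰ ⊆ ⋃ t : Finset ι, {K : KS X | K.1 ⊆ ⋃ i ∈ t, C i} := by
    intro K hK
    obtain ⟨t, ht⟩ := K.2.2.1.elim_finite_subcover C hC
      (fun x hx => hcov (mem_iUnion₂.mpr ⟨K, hK, hx⟩))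
    exact mem_iUnion.mpr ⟨t, ht⟩
  obtain ⟨T, hT⟩ := hℰ.elim_finite_subcover _ hD hEcov
  refine ⟨T.sup id, fun x hx => ?_⟩
  obtain ⟨K, hK, hxK⟩ := mem_iUnion₂.mp hx
  obtain ⟨t, htT, hKt⟩ := mem_iUnion₂.mp (hT hK)
  obtain ⟨i, hit, hxi⟩ := mem_iUnion₂.mp (hKt hxK)
  exact mem_iUnion₂.mpr ⟨i, Finset.mem_sup.mpr ⟨t, htT, hit⟩, hxi⟩

/-- Key lemma: in a well-filtered space, a filtered family of nonempty compact saturated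
subsets of the Scott power space whose intersection lies in `□U` has a member in `□U`. -/
lemma key_box (hwf : WellFiltered X) {𝒟 : Set (@KS (KS X) (scottTop (KS X)))}
    (hne : 𝒟.Nonempty) (hdir : DirectedOn (· ≤ ·) 𝒟)
    {U : Set X} (hU : IsOpen U) (hsub : (⋂ 𝒦 ∈ 𝒟, 𝒦.1) ⊆ {K : KS X | K.1 ⊆ U}) :
    ∃ 𝒦 ∈ 𝒟, 𝒦.1 ⊆ {K : KS X | K.1 ⊆ U} := by
  letI : TopologicalSpace (KS X) := scottTop (KS X)
  by_contra hcon
  push_neg at hcon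
  have hboxo : IsOpen {K : KS X | K.1 ⊆ U} := scottOpen_box hwf hU
  set E : @KS (KS X) (scottTop (KS X)) → Set (KS X) :=
    fun 𝒦 => 𝒦.1 ∩ {K : KS X | K.1 ⊆ U}ᶜ with hE
  have hEcomp : ∀ 𝒦 : @KS (KS X) (scottTop (KS X)), IsCompact (E 𝒦) :=
    fun 𝒦 => 𝒦.2.2.1.inter_right hboxo.isClosed_compl
  set A : @KS (KS X) (scottTop (KS X)) → Set X := fun 𝒦 => ⋃ K ∈ E 𝒦, K.1 with hA
  have hAcomp : ∀ 𝒦, IsCompact (A 𝒦) := fun 𝒦 => isCompact_biUnion_KS hwf (hEcomp 𝒦)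
  have hAne : ∀ 𝒦 ∈ 𝒟, ((A 𝒦) ∩ Uᶜ).Nonempty := by
    intro 𝒦 h𝒦
    obtain ⟨K, hK𝒦, hKbox⟩ := not_subset.mp (hcon 𝒦 h𝒦)
    obtain ⟨y, hyK, hyU⟩ := not_subset.mp hKbox
    exact ⟨y, mem_iUnion₂.mpr ⟨K, ⟨hK𝒦, hKbox⟩, hyK⟩, hyU⟩
  have hS1 : ∀ B ∈ (fun 𝒦 => satSet (A 𝒦)) '' 𝒟, Set.Nonempty B ∧ IsCompact B ∧ IsSat B := by
    rintro _ ⟨𝒦, h𝒦, rfl⟩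
    obtain ⟨y, hy, _⟩ := hAne 𝒦 h𝒦
    exact ⟨⟨y, subset_satSet _ hy⟩, isCompact_satSet (hAcomp 𝒦), isSat_satSet _⟩
  have hmA : ∀ {𝒦 𝒦' : @KS (KS X) (scottTop (KS X))}, 𝒦 ≤ 𝒦' →
      satSet (A 𝒦') ⊆ satSet (A 𝒦) := by
    intro 𝒦 𝒦' hle
    refine satSet_mono fun x hx => ?_
    obtain ⟨K, hK, hxK⟩ := mem_iUnion₂.mp hx
    exact mem_iUnion₂.mpr ⟨K, ⟨KS.subset_of_le hle hK.1, hK.2⟩, hxK⟩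
  have hS2 : ∀ B₁ ∈ (fun 𝒦 => satSet (A 𝒦)) '' 𝒟, ∀ B₂ ∈ (fun 𝒦 => satSet (A 𝒦)) '' 𝒟,
      ∃ B₃ ∈ (fun 𝒦 => satSet (A 𝒦)) '' 𝒟, B₃ ⊆ B₁ ∧ B₃ ⊆ B₂ := by
    rintro _ ⟨𝒦₁, hm₁, rfl⟩ _ ⟨𝒦₂, hm₂, rfl⟩
    obtain ⟨𝒦₃, h₃, l₁, l₂⟩ := hdir 𝒦₁ hm₁ 𝒦₂ hm₂
    exact ⟨satSet (A 𝒦₃), mem_image_of_mem _ h₃, hmA l₁, hmA l₂⟩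
  have hnotsub : ¬ ⋂₀ ((fun 𝒦 => satSet (A 𝒦)) '' 𝒟) ⊆ U := by
    intro h
    obtain ⟨B, hBS, hBU⟩ := hwf _ (hne.image _) hS1 hS2 U hU h
    obtain ⟨𝒦, h𝒦, rfl⟩ := hBS
    obtain ⟨y, hyA, hyU⟩ := hAne 𝒦 h𝒦
    exact hyU (hBU (subset_satSet _ hyA))
  obtain ⟨x, hxS, hxU⟩ := not_subset.mp hnotsub
  have hpt : ∀ 𝒦 ∈ 𝒟, KS.pt x ∈ 𝒦.1 := by
    intro 𝒦 h𝒦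
    have hxsat : x ∈ satSet (A 𝒦) := mem_sInter.mp hxS _ (mem_image_of_mem _ h𝒦)
    obtain ⟨a, haA, hxa⟩ := exists_satPt_of_mem_satSet hxsat
    obtain ⟨K, hKE, haK⟩ := mem_iUnion₂.mp haA
    have hxK : x ∈ K.1 := satPt_subset_of_isSat K.2.2.2 haK hxa
    have hKle : K ≤ KS.pt x := KS.le_of_subset (satPt_subset_of_isSat K.2.2.2 hxK)
    exact isUpperSet_of_isSat_scott 𝒦.2.2.2 hKle hKE.1
  have hmem : KS.pt x ∈ {K : KS X | K.1 ⊆ U} := hsub (mem_iInter₂.mpr hpt)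
  exact hxU (hmem (mem_satPt_self_s5 x))

end WFAux

/-- Let `X` be a well-filtered `T₀` space.  (1) For every nonempty compact
saturated subset `𝒦` of the Scott power space `Σ K(X)`, the union `⋃ 𝒦` is a nonempty compact
saturated subset of `X`.  (2) The union map `K(Σ K(X)) → K(X)` is continuous for the Scott
topologies of the respective Smyth orders. -/
theorem stmt5 {X : Type u} [TopologicalSpace X] [T0Space X] (hwf : WellFiltered X) :
    (∀ 𝒦 : Set (KS X), 𝒦.Nonempty →
        @IsCompact (KS X) (scottTop (KS X)) 𝒦 → @IsSat (KS X) (scottTop (KS X)) 𝒦 →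
        ((⋃ K ∈ 𝒦, K.1).Nonempty ∧ IsCompact (⋃ K ∈ 𝒦, K.1) ∧ IsSat (⋃ K ∈ 𝒦, K.1))) ∧
    (∃ u : @KS (KS X) (scottTop (KS X)) → KS X,
        (∀ 𝒦 : @KS (KS X) (scottTop (KS X)), (u 𝒦).1 = ⋃ K ∈ 𝒦.1, K.1) ∧
        @Continuous _ _ (scottTop (@KS (KS X) (scottTop (KS X)))) (scottTop (KS X)) u) := by
  letI : TopologicalSpace (KS X) := scottTop (KS X)
  have part1 : ∀ 𝒦 : Set (KS X), 𝒦.Nonempty →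
      @IsCompact (KS X) (scottTop (KS X)) 𝒦 →
      ((⋃ K ∈ 𝒦, K.1).Nonempty ∧ IsCompact (⋃ K ∈ 𝒦, K.1) ∧ IsSat (⋃ K ∈ 𝒦, K.1)) := by
    intro 𝒦 hne hc
    refine ⟨?_, isCompact_biUnion_KS hwf hc, isSat_biUnion_KS 𝒦⟩
    obtain ⟨K, hK⟩ := hne
    obtain ⟨y, hy⟩ := K.2.1
    exact ⟨y, mem_iUnion₂.mpr ⟨K, hK, hy⟩⟩
  refine ⟨fun 𝒦 hne hc _ => part1 𝒦 hne hc, ?_⟩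
  set u : @KS (KS X) (scottTop (KS X)) → KS X := fun 𝒦 =>
    ⟨⋃ K ∈ 𝒦.1, K.1, part1 𝒦.1 𝒦.2.1 𝒦.2.2.1⟩ with hu
  refine ⟨u, fun 𝒦 => rfl, ?_⟩
  rw [continuous_def]
  intro V hV
  have hVs : ScottOpen V := hV
  have hmono : ∀ {𝒦 ℒ : @KS (KS X) (scottTop (KS X))}, 𝒦 ≤ ℒ → u 𝒦 ≤ u ℒ := by
    intro 𝒦 ℒ hle
    refine KS.le_of_subset fun x hx => ?_
    obtain ⟨K, hK, hxK⟩ := mem_iUnion₂.mp hx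
    exact mem_iUnion₂.mpr ⟨K, KS.subset_of_le hle hK, hxK⟩
  show ScottOpen (u ⁻¹' V)
  constructor
  · intro 𝒦 ℒ hle h𝒦
    exact hVs.1 (hmono hle) h𝒦
  · intro d hd hdir a ha haV
    have hlub : IsLUB (u '' d) (u a) := by
      constructor
      · rintro _ ⟨𝒦, h𝒦, rfl⟩
        exact hmono (ha.1 h𝒦)
      · rintro b hb
        refine KS.le_of_subset fun x hxb => ?_
        by_contra hxa
        have hcov : a.1 ⊆ ⋃ W : {W : Set X // IsOpen W ∧ x ∉ W}, {K : KS X | K.1 ⊆ W.1} := by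
          intro K hKa
          have hxK : x ∉ K.1 := fun h => hxa (mem_iUnion₂.mpr ⟨K, hKa, h⟩)
          rw [K.2.2.2.eq', mem_sInter] at hxK
          push_neg at hxK
          obtain ⟨W, hW, hxW⟩ := hxK
          exact mem_iUnion.mpr ⟨⟨W, hW.1, hxW⟩, hW.2⟩
        letI : TopologicalSpace (KS X) := scottTop (KS X)
        have hCo : ∀ W : {W : Set X // IsOpen W ∧ x ∉ W},
            IsOpen {K : KS X | K.1 ⊆ W.1} := fun W => scottOpen_box hwf W.2.1
        obtain ⟨t, ht⟩ := a.2.2.1.elim_finite_subcover _ hCo hcov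
        have hUo : IsOpen (⋃ W ∈ t, W.1) := isOpen_biUnion fun W _ => W.2.1
        have hxU : x ∉ ⋃ W ∈ t, W.1 := by
          intro hx
          obtain ⟨W, hWt, hxW⟩ := mem_iUnion₂.mp hx
          exact W.2.2 hxW
        have hbox : (⋂ 𝒦 ∈ d, 𝒦.1) ⊆ {K : KS X | K.1 ⊆ ⋃ W ∈ t, W.1} := by
          rw [← KS.isLUB_val_eq ha]
          intro K hKa
          obtain ⟨W, hWt, hKW⟩ := mem_iUnion₂.mp (ht hKa)
          exact hKW.trans (subset_biUnion_of_mem hWt)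
        obtain ⟨𝒦₀, h𝒦₀, h𝒦₀U⟩ := key_box hwf hd hdir hUo hbox
        have hb0 : b.1 ⊆ ⋃ K ∈ 𝒦₀.1, K.1 := KS.subset_of_le (hb (mem_image_of_mem u h𝒦₀))
        obtain ⟨K, hK, hxK⟩ := mem_iUnion₂.mp (hb0 hxb)
        exact hxU (h𝒦₀U hK hxK)
    have hdir' : DirectedOn (· ≤ ·) (u '' d) := by
      rintro _ ⟨𝒦₁, h₁, rfl⟩ _ ⟨𝒦₂, h₂, rfl⟩
      obtain ⟨𝒦₃, h₃, l₁, l₂⟩ := hdir 𝒦₁ h₁ 𝒦₂ h₂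
      exact ⟨u 𝒦₃, mem_image_of_mem u h₃, hmono l₁, hmono l₂⟩
    obtain ⟨y, hy⟩ := hVs.2 (u '' d) (hd.image u) hdir' (u a) hlub haV
    obtain ⟨𝒦, h𝒦d, rfl⟩ := hy.1
    exact ⟨𝒦, h𝒦d, hy.2⟩
end

section
/- Let X be a T₀ space such that every open set of the upper Vietoris topology on K(X) is Scott open (with respect to the Smyth order). If the Scott power space Σ K(X) is well-filtered, then X is well-filtered. -/
open Set Topology TopologicalSpace

universe u v

/-- In the Scott topology, the principal upper set of a point is compact. -/
lemma upper_isCompact_scott {P : Type u} [Preorder P] (k : P) :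
    @IsCompact P (scottTop P) {x | k ≤ x} := by
  letI : TopologicalSpace P := scottTop P
  apply isCompact_of_finite_subcover
  intro ι Uo hUo hcov
  obtain ⟨i, hi⟩ := Set.mem_iUnion.mp (hcov (show k ≤ k from le_refl k))
  refine ⟨{i}, fun x hx => Set.mem_iUnion.mpr ⟨i, Set.mem_iUnion.mpr ⟨Finset.mem_singleton_self i, ?_⟩⟩⟩
  have hso : ScottOpen (Uo i) := hUo i
  exact hso.1 hx hi

/-- Let `X` be a `T₀` space such that every upper-Vietoris-open subset of
`K(X)` is Scott open (in the Smyth order).  If the Scott power space `Σ K(X)` is well-filtered,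
then `X` is well-filtered. -/

theorem stmt6 {X : Type u} [TopologicalSpace X] [T0Space X]
    (h : ∀ U : Set (KS X), @IsOpen (KS X) (upperVietoris X) U → ScottOpen U)
    (hwf : @WellFiltered (KS X) (scottTop (KS X))) :
    WellFiltered X := by
  intro 𝒦 hne hprops hfil U hU hsub
  letI : TopologicalSpace (KS X) := scottTop (KS X)
  -- The basic open □U of the upper Vietoris topology, Scott open by `h`.
  have hboxU : ScottOpen {L : KS X | L.1 ⊆ U} :=
    h _ (TopologicalSpace.isOpen_generateFrom_of_mem ⟨U, hU, rfl⟩)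
  -- The family of principal upper sets ↑K for K ∈ 𝒦.
  set 𝒳 : Set (Set (KS X)) := {S | ∃ K ∈ 𝒦, S = {L : KS X | L.1 ⊆ K}} with h𝒳
  -- Each member of 𝒳 is a nonempty compact saturated subset of Σ K(X).
  have hmemKS : ∀ K (hK : K ∈ 𝒦), (⟨K, hprops K hK⟩ : KS X).1 = K := fun _ _ => rfl
  have hXprops : ∀ S ∈ 𝒳, S.Nonempty ∧ IsCompact S ∧ IsSat S := by
    rintro S ⟨K, hK, rfl⟩
    refine ⟨⟨⟨K, hprops K hK⟩, Set.mem_setOf.mpr (subset_refl K)⟩, ?_, ?_⟩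
    · exact upper_isCompact_scott (P := KS X) ⟨K, hprops K hK⟩
    · apply Set.Subset.antisymm
      · intro L hL
        exact fun W hW => hW.2 hL
      · intro L hL
        by_contra hnot
        obtain ⟨x, hxL, hxK⟩ := Set.not_subset.mp hnot
        have hKsat := (hprops K hK).2.2
        have hx' : x ∉ ⋂₀ {V : Set X | IsOpen V ∧ K ⊆ V} := by
          rw [← hKsat]; exact hxK
        obtain ⟨V, hV, hKV, hxV⟩ := by
          simpa [Set.mem_sInter, not_forall, and_assoc] using hx'
        have hboxV : ScottOpen {M : KS X | M.1 ⊆ V} :=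
          h _ (TopologicalSpace.isOpen_generateFrom_of_mem ⟨V, hV, rfl⟩)
        have hLV : L ∈ {M : KS X | M.1 ⊆ V} := by
          refine hL _ ⟨hboxV, ?_⟩
          intro M hM
          exact Set.Subset.trans hM hKV
        exact hxV (hLV hxL)
  -- 𝒳 is filtered under reverse inclusion.
  have hXfil : ∀ S₁ ∈ 𝒳, ∀ S₂ ∈ 𝒳, ∃ S₃ ∈ 𝒳, S₃ ⊆ S₁ ∧ S₃ ⊆ S₂ := by
    rintro S₁ ⟨K₁, hK₁, rfl⟩ S₂ ⟨K₂, hK₂, rfl⟩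
    obtain ⟨K₃, hK₃, h31, h32⟩ := hfil K₁ hK₁ K₂ hK₂
    exact ⟨{L : KS X | L.1 ⊆ K₃}, ⟨K₃, hK₃, rfl⟩,
      fun L hL => hL.trans h31, fun L hL => hL.trans h32⟩
  -- ⋂₀ 𝒳 ⊆ □U
  have hinter : ⋂₀ 𝒳 ⊆ {L : KS X | L.1 ⊆ U} := by
    intro L hL
    refine (fun x hx => hsub ?_ : L.1 ⊆ U)
    intro K hK
    exact hL _ ⟨K, hK, rfl⟩ hx
  obtain ⟨K₀, hK₀⟩ := hne
  obtain ⟨S, hS, hSsub⟩ :=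
    hwf 𝒳 ⟨_, ⟨K₀, hK₀, rfl⟩⟩ hXprops hXfil {L : KS X | L.1 ⊆ U} hboxU hinter
  obtain ⟨K, hK, rfl⟩ := hS
  exact ⟨K, hK, hSsub (show (⟨K, hprops K hK⟩ : KS X).1 ⊆ K from subset_rfl)⟩
end

section
/- For a T₀ space X, the following are equivalent: (1) X is well-filtered; (2) every upper-Vietoris-open subset of K(X) is Scott open and the Scott power space Σ K(X) is well-filtered; (3) every upper-Vietoris-open subset of K(X) is Scott open and Σ K(X) is a d-space; (4) K(X) with the Smyth order is a dcpo and every upper-Vietoris-open subset of K(X) is Scott open. -/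
open Set Topology TopologicalSpace

universe u v

/-!
If `X` is well-filtered, the intersection of a directed family in `K(X)` is again nonempty,
compact and saturated, hence is its supremum in the Smyth order; so `K(X)` is a dcpo, and the
boxes `□U` are Scott open because well-filteredness is exactly inaccessibility of `□U` by such
suprema (this also gives 4 ⇒ 1). Well-filtered spaces are d-spaces, and for the Scott topology
the specialization order is the given order, which gives 2 ⇒ 3 ⇒ 4.

The real content is that `Σ K(X)` is well-filtered. If a filtered family `𝔎` of Scott-compact
saturated sets had no member inside a Scott-open `𝒰 ⊇ ⋂ 𝔎`, Zorn's lemma yields a minimal closed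
`𝒜 ⊆ 𝒰ᶜ` meeting every `𝒦 ∈ 𝔎` (topological Rudin lemma). The sets `⋃ (𝒜 ∩ 𝒦)` are compact
saturated, lie in the lower set `𝒜` and are directed, so their supremum `Q = ⋂ ⋃ (𝒜 ∩ 𝒦)` lies
in `𝒜`. Minimality of `𝒜` puts every point of `Q` into every member of `𝒜`, so `Q` is above
some element of each `𝒦` and hence belongs to `⋂ 𝔎 ⊆ 𝒰`, a contradiction.
-/

section Saturation

variable {X : Type u} [TopologicalSpace X]

lemma specLE_iff_specializes {x y : X} : specLE x y ↔ y ⤳ x :=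
  specializes_iff_mem_closure.symm

lemma isSat_iff_forall_specializes {A : Set X} :
    IsSat A ↔ ∀ ⦃a b : X⦄, b ⤳ a → a ∈ A → b ∈ A := by
  rw [IsSat, ← nhdsKer_def, eq_comm]
  refine ⟨fun h a b hba ha => h ▸ mem_nhdsKer_iff_specializes.2 ⟨a, ha, hba⟩,
    fun h => Subset.antisymm (fun x hx => ?_) subset_nhdsKer⟩
  obtain ⟨a, ha, hxa⟩ := mem_nhdsKer_iff_specializes.1 hx
  exact h hxa ha

lemma IsSat.mem_of_specializes {A : Set X} (hA : IsSat A) {a b : X} (hba : b ⤳ a)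
    (ha : a ∈ A) : b ∈ A :=
  isSat_iff_forall_specializes.1 hA hba ha

lemma mem_satPt_iff {a x : X} : x ∈ satPt a ↔ specLE a x := by
  rw [specLE_iff_specializes, ← mem_nhdsKer_singleton, nhdsKer_def]
  simp [satPt]

lemma satPt_subset_satPt {x y : X} (h : specLE x y) : satPt y ⊆ satPt x := fun _ hz =>
  mem_satPt_iff.2 <| specLE_iff_specializes.2 <|
    (specLE_iff_specializes.1 (mem_satPt_iff.1 hz)).trans (specLE_iff_specializes.1 h)

lemma satPt_mem_KS (a : X) : (satPt a).Nonempty ∧ IsCompact (satPt a) ∧ IsSat (satPt a) := by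
  refine ⟨⟨a, mem_satPt_iff.2 (subset_closure rfl)⟩, isCompact_of_finite_subcover ?_,
    isSat_iff_forall_specializes.2 fun x y hyx hx => ?_⟩
  · intro ι U hU hcover
    obtain ⟨i, hi⟩ := mem_iUnion.1 (hcover (mem_satPt_iff.2 (subset_closure rfl)))
    refine ⟨{i}, fun x hx => mem_biUnion (Finset.mem_singleton_self i) ?_⟩
    exact (specLE_iff_specializes.1 (mem_satPt_iff.1 hx)).mem_open (hU i) hi
  · rw [mem_satPt_iff, specLE_iff_specializes] at hx ⊢
    exact hyx.trans hx

end Saturation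

namespace WellFiltered

variable {Y : Type u} [TopologicalSpace Y]

lemma inter_nonempty_of_upperBounds_subset (wf : WellFiltered Y) {D : Set Y} (hD : D.Nonempty)
    (hdir : DirectedOn specLE D) {U : Set Y} (hU : IsOpen U)
    (hub : ∀ y, (∀ x ∈ D, specLE x y) → y ∈ U) : (D ∩ U).Nonempty := by
  have hfilt : DirectedOn (· ⊇ ·) (satPt '' D) :=
    directedOn_image.2 <| hdir.mono fun _ _ h => satPt_subset_satPt h
  obtain ⟨_, ⟨x, hxD, rfl⟩, hxU⟩ := wf (satPt '' D) (hD.image _)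
    (forall_mem_image.2 fun x _ => satPt_mem_KS x) hfilt U hU
    fun y hy => hub y fun x hx => mem_satPt_iff.1 (hy _ (mem_image_of_mem _ hx))
  exact ⟨x, hxD, hxU (mem_satPt_iff.2 (subset_closure rfl))⟩

theorem dSpace (wf : WellFiltered Y) : DSpace Y := by
  refine ⟨fun D hD hdir => ?_, fun U hU => ⟨fun x y hx hxy => ?_, fun D hD hdir a ha haU => ?_⟩⟩
  · by_contra! hnone
    -- an upper bound lying in `closure D` would be the least one
    have hub : ∀ y, (∀ x ∈ D, specLE x y) → y ∈ (closure D)ᶜ := fun y hy hyD =>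
      hnone y ⟨hy, fun b hb => closure_minimal hb isClosed_closure hyD⟩
    obtain ⟨x, hxD, hx⟩ :=
      wf.inter_nonempty_of_upperBounds_subset hD hdir isClosed_closure.isOpen_compl hub
    exact hx (subset_closure hxD)
  · exact (specLE_iff_specializes.1 hxy).mem_open hU hx
  · exact wf.inter_nonempty_of_upperBounds_subset hD hdir hU fun y hy =>
      (specLE_iff_specializes.1 (ha.2 y hy)).mem_open hU haU

end WellFiltered

section Scott

attribute [local instance] scottTop

variable {P : Type u} [Preorder P]

instance isScott_scottTop : Topology.IsScott P univ := by
  refine ⟨TopologicalSpace.ext <| funext fun U => propext ?_⟩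
  exact ((Topology.IsScott.isOpen_iff_isUpperSet_and_dirSupInaccOn (α := Topology.WithScott P)
    (D := univ) (s := U)).trans (and_congr_right' dirSupInaccOn_univ)).symm

lemma specLE_iff_le {x y : P} : specLE x y ↔ x ≤ y := by
  rw [specLE, Topology.IsScott.closure_singleton, mem_Iic]

lemma IsSat.isUpperSet {A : Set P} (hA : IsSat A) : IsUpperSet A := fun a b hab ha => by
  rw [← specLE_iff_le, specLE_iff_specializes] at hab
  exact hA.mem_of_specializes hab ha

lemma DSpace.exists_isLUB (h : DSpace P) {d : Set P} (hd : d.Nonempty)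
    (hdir : DirectedOn (· ≤ ·) d) : ∃ a, IsLUB d a := by
  simp only [DSpace, RelLUB, specLE_iff_le] at h
  exact h.1 d hd (hdir.mono fun _ _ => specLE_iff_le.2)

end Scott

lemma exists_minimal_isClosed_inter_nonempty {Y : Type u} [TopologicalSpace Y]
    {𝒦 : Set (Set Y)} (h𝒦 : ∀ K ∈ 𝒦, IsCompact K) {C : Set Y} (hC : IsClosed C)
    (hC𝒦 : ∀ K ∈ 𝒦, (C ∩ K).Nonempty) :
    ∃ A ⊆ C, Minimal (fun B => IsClosed B ∧ ∀ K ∈ 𝒦, (B ∩ K).Nonempty) A := by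
  refine zorn_superset_nonempty {B | IsClosed B ∧ ∀ K ∈ 𝒦, (B ∩ K).Nonempty}
    (fun c hc hchain hne => ⟨⋂₀ c, ⟨isClosed_sInter fun B hB => (hc hB).1, fun K hK => ?_⟩,
      fun B hB => sInter_subset_of_mem hB⟩) C ⟨hC, hC𝒦⟩
  by_contra hempty
  rw [not_nonempty_iff_eq_empty, inter_comm, sInter_eq_iInter] at hempty
  have : Nonempty c := hne.to_subtype
  have hdir : Directed (· ⊇ ·) (fun B : c => B.1) := fun B₁ B₂ =>
    (hchain.total B₁.2 B₂.2).elim (fun h => ⟨B₁, subset_rfl, h⟩) fun h => ⟨B₂, h, subset_rfl⟩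
  obtain ⟨⟨B, hB⟩, hBK⟩ :=
    (h𝒦 K hK).elim_directed_family_closed _ (fun B => (hc B.2).1) hempty hdir
  exact ((hc hB).2 K hK).ne_empty (by rwa [inter_comm])

section PowerSpace

attribute [local instance] scottTop

variable {X : Type u} [TopologicalSpace X]

lemma KS.le_iff {K L : KS X} : K ≤ L ↔ L.1 ⊆ K.1 := Iff.rfl

lemma wellFiltered_iff_KS : WellFiltered X ↔ ∀ d : Set (KS X), d.Nonempty →
    DirectedOn (· ≤ ·) d → ∀ U : Set X, IsOpen U → ⋂ K ∈ d, K.1 ⊆ U → ∃ K ∈ d, K.1 ⊆ U := by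
  refine ⟨fun wf d hd hdir U hU hsub => ?_, fun h 𝒦 hne hm hfil U hU hsub => ?_⟩
  · obtain ⟨_, ⟨K, hK, rfl⟩, hKU⟩ := wf ((fun K : KS X => K.1) '' d) (hd.image _)
      (forall_mem_image.2 fun K _ => K.2) (directedOn_image.2 hdir) U hU (by rwa [sInter_image])
    exact ⟨K, hK, hKU⟩
  · have hd : (fun K : KS X => K.1) '' {K | K.1 ∈ 𝒦} = 𝒦 :=
      image_preimage_eq_of_subset fun K hK => ⟨⟨K, hm K hK⟩, rfl⟩
    have hdir : DirectedOn (· ≤ ·) {K : KS X | K.1 ∈ 𝒦} := fun K₁ h₁ K₂ h₂ => by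
      obtain ⟨K₃, h₃, h₁₃, h₂₃⟩ := hfil K₁.1 h₁ K₂.1 h₂
      exact ⟨⟨K₃, hm K₃ h₃⟩, h₃, h₁₃, h₂₃⟩
    obtain ⟨K, hK, hKU⟩ := h {K | K.1 ∈ 𝒦} (hne.preimage' fun K hK => ⟨⟨K, hm K hK⟩, rfl⟩)
      hdir U hU (by rwa [← sInter_image, hd])
    exact ⟨K.1, hK, hKU⟩

lemma KS.isLUB_of_val_eq_iInter {d : Set (KS X)} {a : KS X} (ha : a.1 = ⋂ K ∈ d, K.1) :
    IsLUB d a :=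
  ⟨fun _ hK => KS.le_iff.2 (ha ▸ biInter_subset_of_mem hK),
    fun _ hb => KS.le_iff.2 (ha ▸ subset_iInter₂ fun _ hK => hb hK)⟩

namespace WellFiltered

lemma exists_val_eq_iInter (wf : WellFiltered X) {d : Set (KS X)} (hd : d.Nonempty)
    (hdir : DirectedOn (· ≤ ·) d) : ∃ a : KS X, a.1 = ⋂ K ∈ d, K.1 := by
  have wfd := wellFiltered_iff_KS.1 wf d hd hdir
  refine ⟨⟨⋂ K ∈ d, K.1, ?_, ?_, ?_⟩, rfl⟩
  · by_contra hempty
    obtain ⟨K, -, hK⟩ := wfd ∅ isOpen_empty (not_nonempty_iff_eq_empty.1 hempty).subset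
    exact K.2.1.ne_empty (subset_empty_iff.1 hK)
  · refine isCompact_of_finite_subcover fun U hU hcover => ?_
    obtain ⟨K, hK, hKU⟩ := wfd _ (isOpen_iUnion hU) hcover
    obtain ⟨t, ht⟩ := K.2.2.1.elim_finite_subcover U hU hKU
    exact ⟨t, (biInter_subset_of_mem hK).trans ht⟩
  · exact isSat_iff_forall_specializes.2 fun a b hba ha =>
      mem_iInter₂.2 fun K hK => K.2.2.2.mem_of_specializes hba (mem_iInter₂.1 ha K hK)

lemma val_eq_iInter_of_isLUB (wf : WellFiltered X) {d : Set (KS X)} (hd : d.Nonempty)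
    (hdir : DirectedOn (· ≤ ·) d) {a : KS X} (ha : IsLUB d a) : a.1 = ⋂ K ∈ d, K.1 := by
  obtain ⟨b, hb⟩ := wf.exists_val_eq_iInter hd hdir
  rw [ha.unique (KS.isLUB_of_val_eq_iInter hb), hb]

lemma isOpen_box (wf : WellFiltered X) {U : Set X} (hU : IsOpen U) :
    IsOpen {K : KS X | K.1 ⊆ U} := by
  refine ⟨fun K L hKL hK => (KS.le_iff.1 hKL).trans hK, fun d hd hdir a ha haU => ?_⟩
  exact wellFiltered_iff_KS.1 wf d hd hdir U hU (wf.val_eq_iInter_of_isLUB hd hdir ha ▸ haU)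

lemma scottTop_le_upperVietoris_s7 (wf : WellFiltered X) : scottTop (KS X) ≤ upperVietoris X :=
  le_generateFrom_iff_subset_isOpen.2 <| by rintro _ ⟨U, hU, rfl⟩; exact wf.isOpen_box hU

lemma isClosed_setOf_mem_val (wf : WellFiltered X) (x : X) :
    IsClosed {K : KS X | x ∈ K.1} := by
  -- a saturated set misses `x` iff it misses the closure of `x`
  have hbox : {K : KS X | x ∈ K.1} = {K : KS X | K.1 ⊆ (closure {x})ᶜ}ᶜ := by
    refine Set.ext fun K => ⟨fun hx hK => hK hx (subset_closure rfl), fun hK => ?_⟩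
    obtain ⟨y, hy, hyx⟩ := not_subset.1 hK
    exact K.2.2.2.mem_of_specializes (specializes_iff_mem_closure.2 (not_not.1 hyx)) hy
  rw [hbox]
  exact (wf.isOpen_box isClosed_closure.isOpen_compl).isClosed_compl

lemma biUnion_val_mem_KS (wf : WellFiltered X) {𝒞 : Set (KS X)} (h𝒞 : IsCompact 𝒞)
    (hne : 𝒞.Nonempty) :
    (⋃ K ∈ 𝒞, K.1).Nonempty ∧ IsCompact (⋃ K ∈ 𝒞, K.1) ∧ IsSat (⋃ K ∈ 𝒞, K.1) := by
  refine ⟨?_, isCompact_of_finite_subcover fun U hU hcover => ?_, ?_⟩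
  · obtain ⟨K, hK⟩ := hne
    exact K.2.1.mono (subset_biUnion_of_mem hK)
  · have hbox : 𝒞 ⊆ ⋃ t : Finset _, {K : KS X | K.1 ⊆ ⋃ i ∈ t, U i} := fun K hK =>
      mem_iUnion.2 (K.2.2.1.elim_finite_subcover U hU ((subset_biUnion_of_mem hK).trans hcover))
    obtain ⟨t, ht⟩ := h𝒞.elim_directed_cover _
      (fun t => wf.isOpen_box (isOpen_biUnion fun i _ => hU i)) hbox
      (directed_of_isDirected_le fun _ _ h _ hK => hK.trans (biUnion_subset_biUnion_left h))
    exact ⟨t, iUnion₂_subset fun K hK => ht hK⟩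
  · refine isSat_iff_forall_specializes.2 fun a b hba ha => ?_
    obtain ⟨K, hK, haK⟩ := mem_iUnion₂.1 ha
    exact mem_biUnion hK (K.2.2.2.mem_of_specializes hba haK)

lemma inter_sInter_nonempty_of_minimal (wf : WellFiltered X) {𝔎 : Set (Set (KS X))}
    (hne : 𝔎.Nonempty) (hm : ∀ 𝒦 ∈ 𝔎, 𝒦.Nonempty ∧ IsCompact 𝒦 ∧ IsSat 𝒦)
    (hfil : DirectedOn (· ⊇ ·) 𝔎) {𝒜 : Set (KS X)}
    (h𝒜 : Minimal (fun B => IsClosed B ∧ ∀ 𝒦 ∈ 𝔎, (B ∩ 𝒦).Nonempty) 𝒜) :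
    (𝒜 ∩ ⋂₀ 𝔎).Nonempty := by
  obtain ⟨⟨h𝒜closed, h𝒜meets⟩, h𝒜min⟩ := h𝒜
  let G : 𝔎 → KS X := fun 𝒦 => ⟨⋃ K ∈ 𝒜 ∩ 𝒦, K.1,
    wf.biUnion_val_mem_KS ((hm 𝒦 𝒦.2).2.1.inter_left h𝒜closed) (h𝒜meets 𝒦 𝒦.2)⟩
  have hG𝒜 : ∀ 𝒦, G 𝒦 ∈ 𝒜 := fun 𝒦 => by
    obtain ⟨K, hK⟩ := h𝒜meets 𝒦 𝒦.2
    exact Topology.IsScott.isLowerSet_of_isClosed h𝒜closed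
      (KS.le_iff.2 (subset_biUnion_of_mem hK)) hK.1
  have hGdir : DirectedOn (· ≤ ·) (range G) := directedOn_range.2 fun 𝒦₁ 𝒦₂ => by
    obtain ⟨𝒦₃, h₃, h₁₃, h₂₃⟩ := hfil 𝒦₁ 𝒦₁.2 𝒦₂ 𝒦₂.2
    exact ⟨⟨𝒦₃, h₃⟩, biUnion_subset_biUnion_left (inter_subset_inter_right _ h₁₃),
      biUnion_subset_biUnion_left (inter_subset_inter_right _ h₂₃)⟩
  have : Nonempty 𝔎 := hne.to_subtype
  obtain ⟨Q, hQ⟩ := wf.exists_val_eq_iInter (range_nonempty G) hGdir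
  have hQ𝒜 : Q ∈ 𝒜 := Topology.IsScott.dirSupClosed_of_isClosed h𝒜closed
    (range_subset_iff.2 hG𝒜) (range_nonempty G) hGdir (KS.isLUB_of_val_eq_iInter hQ)
  -- by minimality, `𝒜` lies inside every closed set `{K | x ∈ K}` with `x ∈ Q`
  have hle : ∀ K ∈ 𝒜, K ≤ Q := fun K hK x hx => by
    have hmeets : ∀ 𝒦 ∈ 𝔎, (𝒜 ∩ {K : KS X | x ∈ K.1} ∩ 𝒦).Nonempty := fun 𝒦 h𝒦 => by
      obtain ⟨K', hK', hxK'⟩ := mem_iUnion₂.1 (mem_iInter₂.1 (hQ ▸ hx) _ (mem_range_self ⟨𝒦, h𝒦⟩))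
      exact ⟨K', ⟨hK'.1, hxK'⟩, hK'.2⟩
    exact (h𝒜min ⟨h𝒜closed.inter (wf.isClosed_setOf_mem_val x), hmeets⟩ inter_subset_left hK).2
  refine ⟨Q, hQ𝒜, fun 𝒦 h𝒦 => ?_⟩
  obtain ⟨K, hK𝒜, hK𝒦⟩ := h𝒜meets 𝒦 h𝒦
  exact (hm 𝒦 h𝒦).2.2.isUpperSet (hle K hK𝒜) hK𝒦

theorem scottPowerSpace (wf : WellFiltered X) : WellFiltered (KS X) := by
  intro 𝔎 hne hm hfil 𝒰 h𝒰 hsub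
  by_contra! hcon
  obtain ⟨𝒜, h𝒜𝒰, h𝒜⟩ := exists_minimal_isClosed_inter_nonempty (fun 𝒦 h => (hm 𝒦 h).2.1)
    h𝒰.isClosed_compl fun 𝒦 h => by
      obtain ⟨K, hK𝒦, hK𝒰⟩ := not_subset.1 (hcon 𝒦 h)
      exact ⟨K, hK𝒰, hK𝒦⟩
  obtain ⟨Q, hQ𝒜, hQ𝔎⟩ := wf.inter_sInter_nonempty_of_minimal hne hm hfil h𝒜
  exact h𝒜𝒰 hQ𝒜 (hsub hQ𝔎)

end WellFiltered

end PowerSpace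

theorem stmt7_general {X : Type u} [TopologicalSpace X] :
    List.TFAE [
      WellFiltered X,
      (∀ U : Set (KS X), @IsOpen (KS X) (upperVietoris X) U → ScottOpen U) ∧
        @WellFiltered (KS X) (scottTop (KS X)),
      (∀ U : Set (KS X), @IsOpen (KS X) (upperVietoris X) U → ScottOpen U) ∧
        @DSpace (KS X) (scottTop (KS X)),
      (∀ d : Set (KS X), d.Nonempty → DirectedOn (· ≤ ·) d → ∃ a : KS X, IsLUB d a) ∧
        (∀ U : Set (KS X), @IsOpen (KS X) (upperVietoris X) U → ScottOpen U)] := by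
  let _ : TopologicalSpace (KS X) := scottTop (KS X)
  tfae_have 1 → 2 := fun wf => ⟨wf.scottTop_le_upperVietoris_s7, wf.scottPowerSpace⟩
  tfae_have 2 → 3 := fun ⟨huv, wf⟩ => ⟨huv, wf.dSpace⟩
  tfae_have 3 → 4 := fun ⟨huv, hd⟩ => ⟨fun _ => DSpace.exists_isLUB hd, huv⟩
  tfae_have 4 → 1 := by
    rintro ⟨hdcpo, huv⟩
    refine wellFiltered_iff_KS.2 fun d hd hdir U hU hsub => ?_
    obtain ⟨a, ha⟩ := hdcpo d hd hdir
    have haU : a.1 ⊆ U := (subset_iInter₂ (t := fun K (_ : K ∈ d) => K.1)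
      fun K hK => KS.le_iff.1 (ha.1 hK)).trans hsub
    exact (huv _ (isOpen_generateFrom_of_mem ⟨U, hU, rfl⟩)).2 d hd hdir a ha haU
  tfae_finish

/-- For a `T₀` space `X`, the following are equivalent:
(1) `X` is well-filtered;
(2) every upper-Vietoris-open subset of `K(X)` is Scott open and `Σ K(X)` is well-filtered;
(3) every upper-Vietoris-open subset of `K(X)` is Scott open and `Σ K(X)` is a d-space;
(4) `K(X)` with the Smyth order is a dcpo and every upper-Vietoris-open subset of `K(X)` is
Scott open. -/
theorem stmt7 {X : Type u} [TopologicalSpace X] [T0Space X] :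
    List.TFAE [
      WellFiltered X,
      (∀ U : Set (KS X), @IsOpen (KS X) (upperVietoris X) U → ScottOpen U) ∧
        @WellFiltered (KS X) (scottTop (KS X)),
      (∀ U : Set (KS X), @IsOpen (KS X) (upperVietoris X) U → ScottOpen U) ∧
        @DSpace (KS X) (scottTop (KS X)),
      (∀ d : Set (KS X), d.Nonempty → DirectedOn (· ≤ ·) d → ∃ a : KS X, IsLUB d a) ∧
        (∀ U : Set (KS X), @IsOpen (KS X) (upperVietoris X) U → ScottOpen U)] :=
  stmt7_general
end

section
/- Let 𝕁_⊤ = 𝕁 ∪ {⊤} be Johnstone's dcpo with a top element adjoined, and let Σ𝕁_⊤ denote 𝕁_⊤ with the Scott topology. Then K(Σ𝕁_⊤), the poset of nonempty compact saturated subsets of Σ𝕁_⊤ under the Smyth order, is a dcpo, but Σ𝕁_⊤ is not well-filtered. -/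
open Set Topology TopologicalSpace

universe u v

/-!
In `𝕁_⊤` a set is Scott open iff it is an upper set that contains some `(k, n)` whenever it
contains `(k, ∞)`. Hence the saturated sets are the upper sets, and an upper set is compact iff
only finitely many columns contain a point `(k, n)` of it: principal filters are compact, and so
is every set of points `(k, ∞)`, since an open set containing one of them contains `(m, ∞)` for
all large `m`. The intersection of a nonempty family of nonempty compact saturated sets is
therefore again one, so `K(Σ𝕁_⊤)` is a dcpo. On the other hand the compact saturated sets
`{⊤} ∪ {(m, ∞) | m ≥ n}` form a filtered family whose intersection lies in the open set `{⊤}`,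
although none of them does.
-/

lemma scottTop_eq_scott (α : Type*) [Preorder α] : scottTop α = scott α univ := by
  ext U
  rw [@IsScott.isOpen_iff_isUpperSet_and_dirSupInaccOn α univ _ (scott α univ) U
    (@IsScott.mk _ _ _ (scott α univ) rfl),
    dirSupInaccOn_univ]
  exact Iff.rfl

namespace Topology.IsScott

variable {α : Type*} [Preorder α] [TopologicalSpace α] [IsScott α univ]

lemma nhdsKer_eq_upperClosure (s : Set α) : nhdsKer s = upperClosure s := by
  ext x
  simp [mem_nhdsKer_iff_specializes, specializes_iff_mem_closure]

lemma isSat_iff_isUpperSet {s : Set α} : IsSat s ↔ IsUpperSet s := by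
  rw [IsSat, ← nhdsKer_def, nhdsKer_eq_upperClosure]
  exact ⟨fun h => h ▸ (upperClosure s).upper, fun h => h.upperClosure.symm⟩

lemma isCompact_Ici (a : α) : IsCompact (Ici a) := by
  simpa [nhdsKer_eq_upperClosure] using (isCompact_singleton (x := a)).nhdsKer

end Topology.IsScott

lemma isCompact_of_forall_isOpen_finite_diff {X : Type*} [TopologicalSpace X] {A : Set X}
    (h : ∀ U, IsOpen U → (A ∩ U).Nonempty → (A \ U).Finite) : IsCompact A := by
  classical
  refine isCompact_of_finite_subcover fun U hUo hAU => ?_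
  rcases A.eq_empty_or_nonempty with rfl | ⟨x, hx⟩
  · exact ⟨∅, empty_subset _⟩
  obtain ⟨i, hi⟩ := mem_iUnion.1 (hAU hx)
  obtain ⟨t, ht⟩ := (h _ (hUo i) ⟨x, hx, hi⟩).isCompact.elim_finite_subcover U hUo
    (sdiff_subset.trans hAU)
  refine ⟨insert i t, fun y hy => ?_⟩
  by_cases hyi : y ∈ U i
  · exact mem_biUnion (Finset.mem_insert_self i t) hyi
  · obtain ⟨j, hj, hyj⟩ := mem_iUnion₂.1 (ht ⟨hy, hyi⟩)
    exact mem_biUnion (Finset.mem_insert_of_mem hj) hyj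

lemma DirectedOn.exists_gt {α : Type*} [PartialOrder α] {d : Set α}
    (hd : DirectedOn (· ≤ ·) d) (h : ∀ g, ¬ IsGreatest d g) : ∀ x ∈ d, ∃ y ∈ d, x < y := by
  intro x hx
  obtain ⟨y, hy, hyx⟩ : ∃ y ∈ d, ¬ y ≤ x := by simpa [IsGreatest, upperBounds, hx] using h x
  obtain ⟨z, hz, hxz, hyz⟩ := hd x hx y hy
  exact ⟨z, hz, hxz.lt_of_ne fun hxz' => hyx (hxz' ▸ hyz)⟩

lemma KS.isLUB_of_coe_eq_iInter {X : Type*} [TopologicalSpace X] {d : Set (KS X)} {Q : KS X}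
    (hQ : Q.1 = ⋂ K ∈ d, K.1) : IsLUB d Q :=
  ⟨fun K hK => show Q.1 ⊆ K.1 from hQ ▸ biInter_subset_of_mem hK,
    fun _ hb => show _ ⊆ Q.1 from hQ ▸ subset_iInter₂ fun _ hK => hb hK⟩

namespace JohnstoneTop

variable {J : Type*} (e : J ≃ WithTop (ℕ × WithTop ℕ))

-- `top e`, `lim e k` and `pt e k n` are the points `⊤`, `(k, ∞)` and `(k, n)` of `𝕁_⊤`.
def top : J := e.symm ⊤

def lim (k : ℕ) : J := e.symm ↑(k, (⊤ : WithTop ℕ))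

def pt (k n : ℕ) : J := e.symm ↑(k, (n : WithTop ℕ))

def ptCols (K : Set J) : Set ℕ := {k | ∃ n, pt e k n ∈ K}

lemma eq_top_or_lim_or_pt (x : J) : x = top e ∨ (∃ k, x = lim e k) ∨ ∃ k n, x = pt e k n := by
  simp only [top, lim, pt, Equiv.eq_symm_apply]
  rcases e x with _ | ⟨k, _ | n⟩
  exacts [Or.inl rfl, Or.inr (Or.inl ⟨k, rfl⟩), Or.inr (Or.inr ⟨k, n, rfl⟩)]

lemma lim_injective : Function.Injective (lim e) := fun k k' h => by
  simpa [lim] using h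

lemma lim_ne_top (k : ℕ) : lim e k ≠ top e := by simp [lim, top]

variable [PartialOrder J] {e} (horder : ∀ a b : J, a ≤ b ↔ (e b = ⊤ ∨ ∃ p q : ℕ × WithTop ℕ,
      e a = (p : WithTop (ℕ × WithTop ℕ)) ∧ e b = (q : WithTop (ℕ × WithTop ℕ)) ∧
      ((p.1 = q.1 ∧ p.2 ≤ q.2) ∨ (q.2 = ⊤ ∧ p.2 ≤ (q.1 : WithTop ℕ)))))
include horder

lemma le_top (x : J) : x ≤ top e := by simp [horder, top]

lemma eq_top_of_top_le {x : J} (h : top e ≤ x) : x = top e := by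
  simpa [horder, top, Equiv.eq_symm_apply] using h

lemma not_top_le_pt {k n : ℕ} : ¬ top e ≤ pt e k n := by
  simp [horder, pt, top]

lemma pt_le_pt_iff {k n k' n' : ℕ} : pt e k n ≤ pt e k' n' ↔ k = k' ∧ n ≤ n' := by
  simp [horder, pt]

lemma pt_le_lim_iff {k n k' : ℕ} : pt e k n ≤ lim e k' ↔ k = k' ∨ n ≤ k' := by
  simp [horder, pt, lim]

lemma not_lim_le_pt {k k' n : ℕ} : ¬ lim e k ≤ pt e k' n := by
  simp [horder, pt, lim]

lemma lim_le_lim_iff {k k' : ℕ} : lim e k ≤ lim e k' ↔ k = k' := by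
  simp [horder, lim]

lemma eq_lim_or_top_of_lim_le {k : ℕ} {x : J} (h : lim e k ≤ x) : x = lim e k ∨ x = top e := by
  obtain rfl | ⟨k', rfl⟩ | ⟨k', n, rfl⟩ := eq_top_or_lim_or_pt e x
  · exact Or.inr rfl
  · exact Or.inl ((lim_le_lim_iff horder).1 h ▸ rfl)
  · exact absurd h (not_lim_le_pt horder)

lemma pt_mono {k n n' : ℕ} (h : n ≤ n') : pt e k n ≤ pt e k n' :=
  (pt_le_pt_iff horder).2 ⟨rfl, h⟩

lemma isLUB_lim {d : Set J} {k : ℕ} (hd : d ⊆ range (pt e k))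
    (hunb : ∀ N, ∃ n, N ≤ n ∧ pt e k n ∈ d) : IsLUB d (lim e k) := by
  refine ⟨fun x hx => ?_, fun b hb => ?_⟩
  · obtain ⟨n, rfl⟩ := hd hx
    exact (pt_le_lim_iff horder).2 (Or.inl rfl)
  obtain rfl | ⟨k', rfl⟩ | ⟨k', n', rfl⟩ := eq_top_or_lim_or_pt e b
  · exact le_top horder _
  · obtain ⟨n, hn, hnd⟩ := hunb (k' + 1)
    have := (pt_le_lim_iff horder).1 (hb hnd)
    exact (lim_le_lim_iff horder).2 (this.resolve_right (by omega))
  · obtain ⟨n, hn, hnd⟩ := hunb (n' + 1)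
    have := (pt_le_pt_iff horder).1 (hb hnd)
    omega

lemma exists_column_of_directedOn {d : Set J} (hne : d.Nonempty) (hdir : DirectedOn (· ≤ ·) d)
    (hgt : ∀ x ∈ d, ∃ y ∈ d, x < y) :
    ∃ k, d ⊆ range (pt e k) ∧ ∀ N, ∃ n, N ≤ n ∧ pt e k n ∈ d := by
  have htop : top e ∉ d := fun h => by
    obtain ⟨y, -, hy⟩ := hgt _ h
    exact hy.not_ge (le_top horder y)
  have hpt : ∀ x ∈ d, ∃ k n, x = pt e k n := by
    intro x hx
    obtain rfl | ⟨k, rfl⟩ | hx' := eq_top_or_lim_or_pt e x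
    · exact absurd hx htop
    · obtain ⟨y, hy, hky⟩ := hgt _ hx
      obtain rfl | rfl := eq_lim_or_top_of_lim_le horder hky.le
      exacts [absurd rfl hky.ne', absurd hy htop]
    · exact hx'
  obtain ⟨x₀, hx₀⟩ := hne
  obtain ⟨k, n₀, rfl⟩ := hpt x₀ hx₀
  have hcol : d ⊆ range (pt e k) := by
    intro x hx
    obtain ⟨k', n', rfl⟩ := hpt x hx
    obtain ⟨z, hz, hxz, hx₀z⟩ := hdir _ hx _ hx₀
    obtain ⟨k'', m, rfl⟩ := hpt z hz
    obtain ⟨rfl, -⟩ := (pt_le_pt_iff horder).1 hxz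
    obtain ⟨rfl, -⟩ := (pt_le_pt_iff horder).1 hx₀z
    exact ⟨n', rfl⟩
  refine ⟨k, hcol, fun N => ?_⟩
  induction N with
  | zero => exact ⟨n₀, Nat.zero_le _, hx₀⟩
  | succ N ih =>
    obtain ⟨n, hn, hnd⟩ := ih
    obtain ⟨y, hy, hny⟩ := hgt _ hnd
    obtain ⟨m, rfl⟩ := hcol hy
    have hnm : n < m :=
      ((pt_le_pt_iff horder).1 hny.le).2.lt_of_ne (by rintro rfl; exact hny.ne rfl)
    exact ⟨m, by omega, hy⟩

lemma top_mem {K : Set J} (hup : IsUpperSet K) (hne : K.Nonempty) : top e ∈ K :=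
  hne.elim fun x hx => hup (le_top horder x) hx

variable [TopologicalSpace J] [IsScott J univ]

lemma isOpen_iff {U : Set J} :
    IsOpen U ↔ IsUpperSet U ∧ ∀ k, lim e k ∈ U → ∃ n, pt e k n ∈ U := by
  rw [IsScott.isOpen_iff_isUpperSet_and_dirSupInaccOn (D := univ), dirSupInaccOn_univ]
  refine and_congr_right fun hup => ⟨fun hU k hk => ?_, fun hlim d hne hdir a ha haU => ?_⟩
  · obtain ⟨_, ⟨n, rfl⟩, hn⟩ := hU (range_nonempty _)
      (directedOn_range.2 (Monotone.directed_le fun _ _ h => pt_mono horder h))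
      (isLUB_lim horder subset_rfl fun N => ⟨N, le_rfl, mem_range_self N⟩) hk
    exact ⟨n, hn⟩
  by_cases hmax : ∃ g, IsGreatest d g
  · obtain ⟨g, hg⟩ := hmax
    exact ⟨g, hg.1, ha.unique hg.isLUB ▸ haU⟩
  obtain ⟨k, hdk, hunb⟩ := exists_column_of_directedOn horder hne hdir
    (hdir.exists_gt (not_exists.1 hmax))
  obtain ⟨n, hn⟩ := hlim k (ha.unique (isLUB_lim horder hdk hunb) ▸ haU)
  obtain ⟨n', hn', hn'd⟩ := hunb n
  exact ⟨_, hn'd, hup (pt_mono horder hn') hn⟩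

lemma isOpen_singleton_top : IsOpen ({top e} : Set J) :=
  (isOpen_iff horder).2 ⟨fun _ _ hxy hx => eq_top_of_top_le horder (hx ▸ hxy),
    fun k hk => absurd hk (lim_ne_top e k)⟩

lemma exists_forall_pt_notMem_of_isCompact {K : Set J} (hK : IsCompact K) (g : ℕ → ℕ) :
    ∃ M, ∀ k, M < k → pt e k (g k) ∉ K := by
  -- `O m` is Scott open as it contains `pt e k (g k + 1)` in every column, and the `O m` cover `J`.
  set O : ℕ → Set J := fun m => {x | ∀ k, m < k → ¬ x ≤ pt e k (g k)}
  have hO : ∀ m, IsOpen (O m) := fun m => (isOpen_iff horder).2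
    ⟨fun x y hxy hx k hk hy => hx k hk (hxy.trans hy),
     fun k' _ => ⟨g k' + 1, fun k _ h => by
       obtain ⟨rfl, h⟩ := (pt_le_pt_iff horder).1 h; omega⟩⟩
  have hcover : K ⊆ ⋃ m, O m := fun x _ => mem_iUnion.2 <| by
    obtain rfl | ⟨k', rfl⟩ | ⟨k', n, rfl⟩ := eq_top_or_lim_or_pt e x
    · exact ⟨0, fun k _ h => not_top_le_pt horder h⟩
    · exact ⟨0, fun k _ h => not_lim_le_pt horder h⟩
    · exact ⟨k', fun k hk h => by have := (pt_le_pt_iff horder).1 h; omega⟩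
  obtain ⟨M, hM⟩ := hK.elim_directed_cover O hO hcover
    (Monotone.directed_le fun m m' hmm' x hx k hk => hx k (hmm'.trans_lt hk))
  exact ⟨M, fun k hk hkK => hM hkK k hk le_rfl⟩

lemma finite_ptCols_of_isCompact {K : Set J} (hK : IsCompact K) : (ptCols e K).Finite := by
  obtain ⟨M, hM⟩ := exists_forall_pt_notMem_of_isCompact horder hK fun k => sInf {n | pt e k n ∈ K}
  exact (finite_Iic M).subset fun k hk => not_lt.1 fun hMk => hM k hMk (Nat.sInf_mem hk)

lemma isCompact_of_subset_range_lim {A : Set J} (hA : A ⊆ range (lim e)) : IsCompact A := by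
  refine isCompact_of_forall_isOpen_finite_diff fun U hU ⟨x, hxA, hxU⟩ => ?_
  obtain ⟨k, rfl⟩ := hA hxA
  obtain ⟨n, hn⟩ := ((isOpen_iff horder).1 hU).2 k hxU
  refine ((finite_Iio n).image (lim e)).subset fun x ⟨hxA, hxU⟩ => ?_
  obtain ⟨j, rfl⟩ := hA hxA
  refine ⟨j, mem_Iio.2 (not_le.1 fun hnj => hxU ?_), rfl⟩
  exact ((isOpen_iff horder).1 hU).1 ((pt_le_lim_iff horder).2 (Or.inr hnj)) hn

lemma isCompact_of_finite_ptCols {K : Set J} (hup : IsUpperSet K) (hfin : (ptCols e K).Finite) :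
    IsCompact K := by
  set g : ℕ → ℕ := fun k => sInf {n | pt e k n ∈ K}
  have hK :
      K = (⋃ k ∈ ptCols e K, Ici (pt e k (g k))) ∪ (K ∩ {top e}) ∪ (K ∩ range (lim e)) := by
    refine Subset.antisymm (fun x hx => ?_) (union_subset (union_subset
      (iUnion₂_subset fun k hk => hup.Ici_subset (Nat.sInf_mem hk)) inter_subset_left)
      inter_subset_left)
    obtain rfl | ⟨k, rfl⟩ | ⟨k, n, rfl⟩ := eq_top_or_lim_or_pt e x
    · exact Or.inl (Or.inr ⟨hx, rfl⟩)
    · exact Or.inr ⟨hx, k, rfl⟩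
    · exact Or.inl (Or.inl (mem_biUnion ⟨n, hx⟩ (pt_mono horder (Nat.sInf_le hx))))
  rw [hK]
  exact ((hfin.isCompact_biUnion fun k _ => IsScott.isCompact_Ici _).union
    ((finite_singleton _).subset inter_subset_right).isCompact).union
    (isCompact_of_subset_range_lim horder inter_subset_right)

lemma exists_isLUB (d : Set (KS J)) (hd : d.Nonempty) : ∃ Q, IsLUB d Q := by
  obtain ⟨K₀, hK₀⟩ := hd
  have hup : ∀ K : KS J, IsUpperSet K.1 :=
    fun K => IsScott.isSat_iff_isUpperSet.1 K.2.2.2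
  set Q := ⋂ K ∈ d, K.1
  have hQup : IsUpperSet Q := isUpperSet_iInter₂ fun K _ => hup K
  have hQcols : (ptCols e Q).Finite := (finite_ptCols_of_isCompact horder K₀.2.2.1).subset
    fun k ⟨n, hn⟩ => ⟨n, mem_iInter₂.1 hn K₀ hK₀⟩
  exact ⟨⟨Q, ⟨top e, mem_iInter₂.2 fun K _ => top_mem horder (hup K) K.2.1⟩,
    isCompact_of_finite_ptCols horder hQup hQcols, IsScott.isSat_iff_isUpperSet.2 hQup⟩,
    KS.isLUB_of_coe_eq_iInter rfl⟩

lemma not_wellFiltered : ¬ WellFiltered J := by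
  intro hWF
  set K : ℕ → Set J := fun n => insert (top e) (lim e '' Ici n)
  have hKup : ∀ n, IsUpperSet (K n) := by
    rintro n x y hxy (rfl | ⟨k, hk, rfl⟩)
    · exact Or.inl (eq_top_of_top_le horder hxy)
    · obtain rfl | rfl := eq_lim_or_top_of_lim_le horder hxy
      exacts [Or.inr ⟨k, hk, rfl⟩, Or.inl rfl]
  have hKanti : Antitone K := fun m n hmn =>
    insert_subset_insert (image_mono (Ici_subset_Ici.2 hmn))
  have hinter : ⋂₀ range K ⊆ {top e} := by
    intro x hx
    obtain rfl | ⟨k, -, rfl⟩ := hx _ ⟨0, rfl⟩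
    · rfl
    · obtain h | ⟨j, hj, hjk⟩ := hx _ ⟨k + 1, rfl⟩
      · exact h
      · have := lim_injective e hjk
        simp only [mem_Ici] at hj
        omega
  obtain ⟨_, ⟨n, rfl⟩, hn⟩ := hWF (range K) (range_nonempty K)
    (forall_mem_range.2 fun n => ⟨insert_nonempty _ _,
      (isCompact_of_subset_range_lim horder (image_subset_range _ _)).insert _,
      IsScott.isSat_iff_isUpperSet.2 (hKup n)⟩)
    (forall_mem_range.2 fun m => forall_mem_range.2 fun n => ⟨K (max m n), mem_range_self _,
      hKanti (le_max_left m n), hKanti (le_max_right m n)⟩)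
    {top e} (isOpen_singleton_top horder) hinter
  exact lim_ne_top e n (hn (Or.inr ⟨n, self_mem_Ici, rfl⟩))

end JohnstoneTop

/-- Let `JT` be Johnstone's dcpo `𝕁 = ℕ × (ℕ ∪ {∞})` with a top element `⊤`
adjoined, carrying the Scott topology.  Then `K(Σ𝕁_⊤)` (with the Smyth order) is a dcpo, but
`Σ𝕁_⊤` is not well-filtered. -/
theorem stmt9 (JT : Type) [PartialOrder JT] [tJT : TopologicalSpace JT]
    (htop : tJT = scottTop JT)
    (e : JT ≃ WithTop (ℕ × WithTop ℕ))
    (horder : ∀ a b : JT, a ≤ b ↔ (e b = ⊤ ∨ ∃ p q : ℕ × WithTop ℕ,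
      e a = (p : WithTop (ℕ × WithTop ℕ)) ∧ e b = (q : WithTop (ℕ × WithTop ℕ)) ∧
      ((p.1 = q.1 ∧ p.2 ≤ q.2) ∨ (q.2 = ⊤ ∧ p.2 ≤ (q.1 : WithTop ℕ))))) :
    (∀ d : Set (KS JT), d.Nonempty → DirectedOn (· ≤ ·) d → ∃ a : KS JT, IsLUB d a) ∧
    ¬ WellFiltered JT := by
  have : IsScott JT univ := ⟨htop.trans (scottTop_eq_scott JT)⟩
  exact ⟨fun d hd _ => JohnstoneTop.exists_isLUB horder d hd,
    JohnstoneTop.not_wellFiltered horder⟩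
end
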